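/- arXiv:2507.10123 — 4 statements merged into one kernel-verified Lean document; each statement's English description precedes it below -/
import Mathlib

section
/- Let G be a connected graph in which no edge belongs to more than one cycle (weakly-cyclic). For any vertex v, let C be a connected component of G with v removed, and let E_C be the set of edges of G joining v to vertices of C. Then |E_C| = 1 or |E_C| = 2. -/
open SimpleGraph

lemma lift_reachable {V : Type*} {G : SimpleGraph V} {s : Set V} {a b : V}
    (p : G.Walk a b) (hp : ∀ x ∈ p.support, x ∈ s) :
    (G.induce s).Reachable ⟨a, hp _ p.start_mem_support⟩ ⟨b, hp _ p.end_mem_support⟩ := by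
  induction p with
  | nil => exact Reachable.refl _
  | @cons u x w h q ih =>
      refine Reachable.trans (Adj.reachable ?_) (ih fun y hy => hp y (by simp [hy]))
      exact h

lemma cycle_of_path {V : Type*} {G : SimpleGraph V} {v w1 w2 : V}
    (h1 : G.Adj v w1) (h2 : G.Adj v w2) (hne : w1 ≠ w2)
    (p : G.Walk w1 w2) (hp : p.IsPath) (hv : v ∉ p.support) :
    (Walk.cons h1 (p.concat h2.symm)).IsCycle := by
  constructor
  · constructor
    · constructor
      rw [Walk.edges_cons, Walk.edges_concat, List.concat_eq_append]
      refine List.nodup_cons.2 ⟨?_, ?_⟩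
      · intro hmem
        rcases List.mem_append.1 hmem with hA | hB
        · exact hv (p.fst_mem_support_of_mem_edges hA)
        · simp only [List.mem_singleton] at hB
          rw [Sym2.eq_iff] at hB
          obtain ⟨hB1, hB2⟩ | ⟨hB1, hB2⟩ := hB
          · exact G.ne_of_adj h1 hB2.symm
          · exact hne hB2
      · refine List.Nodup.append hp.isTrail.edges_nodup (List.nodup_singleton _) ?_
        intro e heA heB
        simp only [List.mem_singleton] at heB
        subst heB
        exact hv (p.snd_mem_support_of_mem_edges heA)
    · simp
  · rw [Walk.support_cons, List.tail_cons, Walk.support_concat]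
    exact List.Nodup.append hp.support_nodup (List.nodup_singleton _)
      (by intro x hx hx'; simp only [List.mem_singleton] at hx'; subst hx'; exact hv hx)

/-- In a connected weakly-cyclic graph (every edge lies in at most one cycle),
for any vertex `v` and any connected component `C` of `G` with `v` removed,
the set of edges of `G` joining `v` to vertices of `C` has cardinality 1 or 2. -/
theorem stmt_0 {V : Type*} [Fintype V] [DecidableEq V]
    (G : SimpleGraph V)
    (hconn : G.Connected)
    (hwc : ∀ e ∈ G.edgeSet, ∀ (u w : V) (c₁ : G.Walk u u) (c₂ : G.Walk w w),
      c₁.IsCycle → c₂.IsCycle → e ∈ c₁.edges → e ∈ c₂.edges →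
      c₁.edges.toFinset = c₂.edges.toFinset)
    (v : V)
    (C : (G.induce ({v}ᶜ : Set V)).ConnectedComponent)
    (EC : Finset V)
    (hEC : ∀ w, w ∈ EC ↔ ∃ hw : w ≠ v, G.Adj v w ∧
      (G.induce ({v}ᶜ : Set V)).connectedComponentMk ⟨w, hw⟩ = C) :
    EC.card = 1 ∨ EC.card = 2 := by
  have hnonempty : EC.Nonempty := by
    obtain ⟨⟨u, hu⟩, hrep⟩ := C.exists_rep
    obtain ⟨p⟩ := hconn.preconnected v u
    obtain ⟨q, hq⟩ := p.toPath
    cases q with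
    | nil => exact absurd rfl hu
    | @cons _ w _ h r =>
        rw [Walk.cons_isPath_iff] at hq
        obtain ⟨hr, hvr⟩ := hq
        have hwv : w ≠ v := (G.ne_of_adj h).symm
        refine ⟨w, (hEC w).2 ⟨hwv, h, ?_⟩⟩
        have hsub : ∀ x ∈ r.support, x ∈ ({v}ᶜ : Set V) := by
          intro x hx
          simp only [Set.mem_compl_iff, Set.mem_singleton_iff]
          rintro rfl; exact hvr hx
        have hreach := lift_reachable r hsub
        rw [← hrep]
        exact ConnectedComponent.sound hreach
  have hle : EC.card ≤ 2 := by
    by_contra hlt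
    push_neg at hlt
    obtain ⟨T, hTsub, hT3⟩ := Finset.exists_subset_card_eq hlt
    obtain ⟨w1, w2, w3, h12, h13, h23, rfl⟩ := Finset.card_eq_three.1 hT3
    obtain ⟨hv1, ha1, hc1⟩ := (hEC w1).1 (hTsub (by simp))
    obtain ⟨hv2, ha2, hc2⟩ := (hEC w2).1 (hTsub (by simp))
    obtain ⟨hv3, ha3, hc3⟩ := (hEC w3).1 (hTsub (by simp))
    -- build path from w1 to wi avoiding v, for i = 2, 3
    have build : ∀ (w : V) (hw : w ≠ v),
        (G.induce ({v}ᶜ : Set V)).connectedComponentMk ⟨w, hw⟩ = C →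
        ∃ q : G.Walk w1 w, q.IsPath ∧ v ∉ q.support := by
      intro w hw hcw
      obtain ⟨p'⟩ := ConnectedComponent.exact (hc1.trans hcw.symm)
      let q0 : G.Walk w1 w := p'.map (Embedding.induce ({v}ᶜ : Set V)).toHom
      have hvq0 : v ∉ q0.support := by
        intro hv'
        have hsm := Walk.support_map (Embedding.induce ({v}ᶜ : Set V)).toHom p'
        replace hv' := (congrArg (v ∈ ·) hsm).mp hv'
        obtain ⟨⟨x, hx⟩, _, hx2⟩ := List.mem_map.1 hv'
        exact hx hx2
      exact ⟨q0.bypass, q0.bypass_isPath, fun hv' => hvq0 (q0.support_bypass_subset hv')⟩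
    obtain ⟨q12, hq12, hv12⟩ := build w2 hv2 hc2
    obtain ⟨q13, hq13, hv13⟩ := build w3 hv3 hc3
    have hcyc12 := cycle_of_path ha1 ha2 h12 q12 hq12 hv12
    have hcyc13 := cycle_of_path ha1 ha3 h13 q13 hq13 hv13
    have hfin := hwc s(v, w1) (G.mem_edgeSet.2 ha1) v v _ _ hcyc12 hcyc13
      (by rw [Walk.edges_cons]; exact List.mem_cons_self)
      (by rw [Walk.edges_cons]; exact List.mem_cons_self)
    have hmem : s(v, w2) ∈ (Walk.cons ha1 (q13.concat ha3.symm)).edges := by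
      rw [← List.mem_toFinset, ← hfin, List.mem_toFinset, Walk.edges_cons,
        Walk.edges_concat, List.concat_eq_append]
      exact List.mem_cons.2 (Or.inr (List.mem_append.2 (Or.inr (List.mem_singleton.2 (Sym2.eq_swap)))))
    rw [Walk.edges_cons, Walk.edges_concat, List.concat_eq_append] at hmem
    rcases List.mem_cons.1 hmem with h' | h'
    · rw [Sym2.eq_iff] at h'
      obtain ⟨_, hB⟩ | ⟨hB, _⟩ := h'
      · exact h12 hB.symm
      · exact hv1 hB.symm
    rcases List.mem_append.1 h' with h'' | h''
    · exact hv13 (q13.fst_mem_support_of_mem_edges h'')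
    · rw [List.mem_singleton, Sym2.eq_iff] at h''
      obtain ⟨hB1, hB2⟩ | ⟨hB1, hB2⟩ := h''
      · exact hv2 hB2
      · exact h23 hB2
  have hge : 1 ≤ EC.card := Finset.card_pos.2 hnonempty
  omega
end

section
/- In a weakly-cyclic connected graph, for any vertex v, the degree of v equals the sum over connected components C of G minus v of |E_C|, and hence the degree of v is at most twice the number of connected components of G minus v. -/
open SimpleGraph

private lemma aux_cycle {V : Type*} (G : SimpleGraph V) {v a b : V}
    (hva : G.Adj v a) (hbv : G.Adj b v) (hab : a ≠ b)
    (P : G.Walk a b) (hP : P.IsPath) (hv : v ∉ P.support) :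
    (Walk.cons hva (P.concat hbv)).IsCycle := by
  rw [Walk.cons_isCycle_iff]
  constructor
  · rw [Walk.isPath_def, Walk.support_concat]
    rw [List.nodup_append']
    refine ⟨hP.support_nodup, List.nodup_singleton _, ?_⟩
    intro x hx hx'
    rw [List.mem_singleton] at hx'
    subst hx'
    exact hv hx
  · rw [Walk.edges_concat, List.concat_eq_append]
    simp only [List.mem_append, List.mem_singleton]
    rintro (h | h)
    · exact hv (P.fst_mem_support_of_mem_edges h)
    · rcases Sym2.eq_iff.mp h with ⟨h1, h2⟩ | ⟨h1, h2⟩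
      · exact hva.ne' h2
      · exact hab h2

/-- In a connected weakly-cyclic graph, the degree of any vertex `v` equals the sum,
over the connected components `C` of `G` minus `v`, of the number of edges joining
`v` to `C`; hence the degree of `v` is at most twice the number of such components. -/
theorem stmt_1 {V : Type*} [Fintype V] [DecidableEq V]
    (G : SimpleGraph V) [DecidableRel G.Adj]
    (hconn : G.Connected)
    (hwc : ∀ e ∈ G.edgeSet, ∀ (u w : V) (c₁ : G.Walk u u) (c₂ : G.Walk w w),
      c₁.IsCycle → c₂.IsCycle → e ∈ c₁.edges → e ∈ c₂.edges →
      c₁.edges.toFinset = c₂.edges.toFinset)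
    (v : V)
    [Fintype ((G.induce ({v}ᶜ : Set V)).ConnectedComponent)] :
    G.degree v =
      ∑ C : (G.induce ({v}ᶜ : Set V)).ConnectedComponent,
        {w : V | ∃ hw : w ≠ v, G.Adj v w ∧
          (G.induce ({v}ᶜ : Set V)).connectedComponentMk ⟨w, hw⟩ = C}.ncard ∧
    G.degree v ≤ 2 * Fintype.card ((G.induce ({v}ᶜ : Set V)).ConnectedComponent) := by
  classical
  set F : (G.induce ({v}ᶜ : Set V)).ConnectedComponent → Finset V := fun C =>
    Finset.univ.filter (fun w => ∃ hw : w ≠ v, G.Adj v w ∧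
      (G.induce ({v}ᶜ : Set V)).connectedComponentMk ⟨w, hw⟩ = C) with hFdef
  have hcard : ∀ C : (G.induce ({v}ᶜ : Set V)).ConnectedComponent,
      {w : V | ∃ hw : w ≠ v, G.Adj v w ∧ (G.induce ({v}ᶜ : Set V)).connectedComponentMk ⟨w, hw⟩ = C}.ncard
        = (F C).card := by
    intro C
    rw [← Set.ncard_coe_finset]
    congr 1
    ext w
    simp [hFdef]
  -- degree = sum of fiber cards
  have hdeg : G.degree v = ∑ C : (G.induce ({v}ᶜ : Set V)).ConnectedComponent, (F C).card := by
    by_cases hE : IsEmpty (G.induce ({v}ᶜ : Set V)).ConnectedComponent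
    · have hnb : G.neighborFinset v = ∅ := by
        ext w
        simp only [mem_neighborFinset, Finset.notMem_empty, iff_false]
        intro h
        exact hE.elim ((G.induce ({v}ᶜ : Set V)).connectedComponentMk ⟨w, h.ne'⟩)
      rw [← card_neighborFinset_eq_degree, hnb]
      simp
    · rw [not_isEmpty_iff] at hE
      obtain ⟨C0⟩ := hE
      set f : V → (G.induce ({v}ᶜ : Set V)).ConnectedComponent := fun w =>
        if hw : w ≠ v then (G.induce ({v}ᶜ : Set V)).connectedComponentMk ⟨w, hw⟩ else C0 with hfdef
      rw [← card_neighborFinset_eq_degree,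
        Finset.card_eq_sum_card_fiberwise (f := f) (t := Finset.univ)
          (fun x _ => Finset.mem_univ _)]
      refine Finset.sum_congr rfl fun C _ => ?_
      congr 1
      ext w
      simp only [Finset.mem_filter, mem_neighborFinset, hFdef, Finset.mem_univ, true_and]
      constructor
      · rintro ⟨ha, hf⟩
        refine ⟨ha.ne', ha, ?_⟩
        rw [hfdef] at hf
        simpa only [dif_pos ha.ne'] using hf
      · rintro ⟨hw, ha, hC⟩
        refine ⟨ha, ?_⟩
        rw [hfdef]
        simpa only [dif_pos hw] using hC
  -- each fiber has at most 2 elements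
  have hbound : ∀ C : (G.induce ({v}ᶜ : Set V)).ConnectedComponent, (F C).card ≤ 2 := by
    intro C
    by_contra hlt
    push_neg at hlt
    obtain ⟨w₁, w₂, w₃, hm₁, hm₂, hm₃, h12, h13, h23⟩ := Finset.two_lt_card_iff.mp hlt
    simp only [hFdef, Finset.mem_filter, Finset.mem_univ, true_and] at hm₁ hm₂ hm₃
    obtain ⟨hn₁, ha₁, hC₁⟩ := hm₁
    obtain ⟨hn₂, ha₂, hC₂⟩ := hm₂
    obtain ⟨hn₃, ha₃, hC₃⟩ := hm₃
    -- paths in H from w₂, w₃ to w₁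
    have hr₂ : (G.induce ({v}ᶜ : Set V)).Reachable ⟨w₂, hn₂⟩ ⟨w₁, hn₁⟩ :=
      ConnectedComponent.exact (hC₂.trans hC₁.symm)
    have hr₃ : (G.induce ({v}ᶜ : Set V)).Reachable ⟨w₃, hn₃⟩ ⟨w₁, hn₁⟩ :=
      ConnectedComponent.exact (hC₃.trans hC₁.symm)
    obtain ⟨q₂⟩ := hr₂
    obtain ⟨q₃⟩ := hr₃
    -- map paths to G
    have hinj : Function.Injective (Embedding.induce (G := G) ({v}ᶜ : Set V)).toHom :=
      (Embedding.induce (G := G) ({v}ᶜ : Set V)).injective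
    set P₂ : G.Walk w₂ w₁ := q₂.toPath.val.map (Embedding.induce (G := G) ({v}ᶜ : Set V)).toHom with hP₂def
    set P₃ : G.Walk w₃ w₁ := q₃.toPath.val.map (Embedding.induce (G := G) ({v}ᶜ : Set V)).toHom with hP₃def
    have hP₂ : P₂.IsPath := Walk.map_isPath_of_injective hinj q₂.toPath.prop
    have hP₃ : P₃.IsPath := Walk.map_isPath_of_injective hinj q₃.toPath.prop
    have hv₂ : v ∉ P₂.support := by
      simp only [hP₂def, Walk.support_map]
      intro hmem
      obtain ⟨⟨x, hx⟩, -, hxx⟩ := List.mem_map.mp ((congrArg (v ∈ ·) (Walk.support_map _ _)).mp hmem)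
      exact hx (by simpa using hxx)
    have hv₃ : v ∉ P₃.support := by
      simp only [hP₃def, Walk.support_map]
      intro hmem
      obtain ⟨⟨x, hx⟩, -, hxx⟩ := List.mem_map.mp ((congrArg (v ∈ ·) (Walk.support_map _ _)).mp hmem)
      exact hx (by simpa using hxx)
    -- cycles
    set c₂ : G.Walk v v := Walk.cons ha₂ (P₂.concat ha₁.symm) with hc₂def
    set c₃ : G.Walk v v := Walk.cons ha₃ (P₃.concat ha₁.symm) with hc₃def
    have hcyc₂ : c₂.IsCycle := aux_cycle G ha₂ ha₁.symm h12.symm P₂ hP₂ hv₂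
    have hcyc₃ : c₃.IsCycle := aux_cycle G ha₃ ha₁.symm h13.symm P₃ hP₃ hv₃
    have he : s(w₁, v) ∈ G.edgeSet := ha₁.symm
    have he₂ : s(w₁, v) ∈ c₂.edges := by
      rw [hc₂def, Walk.edges_cons, Walk.edges_concat]
      simp
    have he₃ : s(w₁, v) ∈ c₃.edges := by
      rw [hc₃def, Walk.edges_cons, Walk.edges_concat]
      simp
    have heq := hwc s(w₁, v) he v v c₂ c₃ hcyc₂ hcyc₃ he₂ he₃
    have hmem₂ : s(v, w₂) ∈ c₂.edges := by
      rw [hc₂def, Walk.edges_cons]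
      exact List.mem_cons_self
    have hmem₃ : s(v, w₂) ∈ c₃.edges := by
      have := heq ▸ (List.mem_toFinset.mpr hmem₂)
      exact List.mem_toFinset.mp this
    rw [hc₃def, Walk.edges_cons, Walk.edges_concat, List.concat_eq_append] at hmem₃
    simp only [List.mem_cons, List.mem_append, List.mem_singleton] at hmem₃
    rcases hmem₃ with h | h | h
    · rcases Sym2.eq_iff.mp h with ⟨-, h2⟩ | ⟨h1, -⟩
      · exact h23 h2
      · exact hn₃ h1.symm
    · exact hv₃ (P₃.fst_mem_support_of_mem_edges h)
    · rcases h with h | h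
      · rcases Sym2.eq_iff.mp h with ⟨-, h2⟩ | ⟨-, h2⟩
        · exact hn₂ h2
        · exact h12 h2.symm
      · exact (List.not_mem_nil h)
  refine ⟨?_, ?_⟩
  · rw [hdeg]
    exact Finset.sum_congr rfl fun C _ => (hcard C).symm
  · rw [hdeg]
    calc ∑ C : (G.induce ({v}ᶜ : Set V)).ConnectedComponent, (F C).card
        ≤ ∑ _C : (G.induce ({v}ᶜ : Set V)).ConnectedComponent, 2 := Finset.sum_le_sum fun C _ => hbound C
      _ = 2 * Fintype.card (G.induce ({v}ᶜ : Set V)).ConnectedComponent := by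
          rw [Finset.sum_const, Finset.card_univ, smul_eq_mul, mul_comm]
end

section
/- Let T ≥ 1 be a finite time horizon and c : Fin T → ℝ with minimum value c_min attained at period t₁. For each n, let d_n(i,t) ≥ d₀ > 0 be demands on n buses and suppose (i) Σ_{i=1}^n d_n(i,t) → ∞ as n → ∞ for every t, and (ii) there is a constant M such that for every n and every bus b, d_n(b,t) + Σ_{i ∈ N(b)} d_n(i,t) ≤ M for all t (bounded neighborhood demand). Define the saving bound σ_n = max_b Σ_{t=1}^T (d_n(b,t) + Σ_{i∈N(b)} d_n(i,t)) · (c(t) − c_min) and the baseline cost opt⁰_n = Σ_{t=1}^T (Σ_{i=1}^n d_n(i,t)) · c(t). Then σ_n / opt⁰_n → 0 as n → ∞, assuming c(t) > 0 for all t. -/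
open Filter

/-- Vanishing relative benefit of a single battery: with demands bounded below,
total demand diverging, and bounded neighborhood demand, the ratio of the saving
bound `σ_n` to the baseline cost `opt⁰_n` tends to zero as the grid scales. -/
theorem stmt_3 {T : ℕ} (hT : 1 ≤ T)
    (c : Fin T → ℝ) (hcpos : ∀ t, 0 < c t)
    (t₁ : Fin T) (ht₁ : ∀ t, c t₁ ≤ c t)
    (d : (n : ℕ) → Fin n → Fin T → ℝ)
    (N : (n : ℕ) → Fin n → Finset (Fin n))
    (d₀ : ℝ) (hd₀ : 0 < d₀)
    (hdlb : ∀ n (i : Fin n) (t : Fin T), d₀ ≤ d n i t)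
    (hdiv : ∀ t : Fin T, Tendsto (fun n => ∑ i : Fin n, d n i t) atTop atTop)
    (M : ℝ)
    (hM : ∀ n (b : Fin n) (t : Fin T),
      d n b t + ∑ i ∈ N n b, d n i t ≤ M)
    (sig opt0 : ℕ → ℝ)
    (hsig : ∀ n, sig n =
      ⨆ b : Fin n, ∑ t, (d n b t + ∑ i ∈ N n b, d n i t) * (c t - c t₁))
    (hopt0 : ∀ n, opt0 n = ∑ t, (∑ i : Fin n, d n i t) * c t) :
    Tendsto (fun n => sig n / opt0 n) atTop (nhds 0) := by
  set K : ℝ := ∑ t, M * (c t - c t₁) with hK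
  -- each bus's sum is between 0 and K
  have hterm : ∀ n (b : Fin n),
      0 ≤ ∑ t, (d n b t + ∑ i ∈ N n b, d n i t) * (c t - c t₁) ∧
      (∑ t, (d n b t + ∑ i ∈ N n b, d n i t) * (c t - c t₁)) ≤ K := by
    intro n b
    constructor
    · apply Finset.sum_nonneg
      intro t _
      have h1 : 0 ≤ d n b t + ∑ i ∈ N n b, d n i t := by
        have := hdlb n b t
        have h2 : (0:ℝ) ≤ ∑ i ∈ N n b, d n i t :=
          Finset.sum_nonneg fun i _ => le_trans hd₀.le (hdlb n i t)
        linarith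
      exact mul_nonneg h1 (sub_nonneg.mpr (ht₁ t))
    · apply Finset.sum_le_sum
      intro t _
      exact mul_le_mul_of_nonneg_right (hM n b t) (sub_nonneg.mpr (ht₁ t))
  have hsig_le : ∀ n, 1 ≤ n → sig n ≤ K := by
    intro n hn
    rw [hsig]
    haveI : Nonempty (Fin n) := ⟨⟨0, hn⟩⟩
    exact ciSup_le fun b => (hterm n b).2
  have hsig_nn : ∀ n, 1 ≤ n → 0 ≤ sig n := by
    intro n hn
    rw [hsig]
    haveI : Nonempty (Fin n) := ⟨⟨0, hn⟩⟩
    have hbdd : BddAbove (Set.range fun b : Fin n =>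
        ∑ t, (d n b t + ∑ i ∈ N n b, d n i t) * (c t - c t₁)) := by
      refine ⟨K, ?_⟩
      rintro x ⟨b, rfl⟩
      exact (hterm n b).2
    exact le_trans (hterm n ⟨0, hn⟩).1 (le_ciSup hbdd ⟨0, hn⟩)
  -- opt0 tends to atTop
  have hopt_top : Tendsto opt0 atTop atTop := by
    apply tendsto_atTop_mono (f := fun n => (∑ i : Fin n, d n i t₁) * c t₁)
    · intro n
      rw [hopt0]
      apply Finset.single_le_sum (f := fun t => (∑ i : Fin n, d n i t) * c t)
      · intro t _
        exact mul_nonneg (Finset.sum_nonneg fun i _ => le_trans hd₀.le (hdlb n i t))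
          (hcpos t).le
      · exact Finset.mem_univ t₁
    · exact Tendsto.atTop_mul_const (hcpos t₁) (hdiv t₁)
  have hKo : Tendsto (fun n => K / opt0 n) atTop (nhds 0) :=
    Tendsto.div_atTop tendsto_const_nhds hopt_top
  have hpos : ∀ᶠ n in atTop, 0 < opt0 n := hopt_top.eventually_gt_atTop 0
  have hge : ∀ᶠ n in atTop, 1 ≤ n := eventually_ge_atTop 1
  apply tendsto_of_tendsto_of_tendsto_of_le_of_le' (tendsto_const_nhds (x := (0:ℝ))) hKo
  · filter_upwards [hpos, hge] with n h1 h2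
    exact div_nonneg (hsig_nn n h2) h1.le
  · filter_upwards [hpos, hge] with n h1 h2
    exact div_le_div_of_nonneg_right (hsig_le n h2) h1.le |>.trans_eq rfl
end

section
/- In a finite tree with root b, edge capacities f_e > 0 (possibly heterogeneous), and node surpluses s(i) ≥ 0, define recursively for each vertex v ≠ b with children ch(v): Export(v) = min( s(v) + Σ_{w ∈ ch(v)} Export(w), f_{parent(v),v} ). Then the maximum feasible inflow into b, i.e., the maximum of Σ_{j ∈ N(b)} x_j over flows x on edges satisfying capacity constraints |x_e| ≤ f_e and node balance 0 ≤ injection(i) ≤ s(i), equals Σ_{j ∈ N(b)} Export(j). -/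
noncomputable def dep {V : Type*} [DecidableEq V] (par : V → V) (b : V) (h : ∀ v, ∃ n : ℕ, par^[n] v = b) (v : V) : ℕ :=
  Nat.find (h v)

lemma dep_spec {V : Type*} [DecidableEq V] (par : V → V) (b : V) (h : ∀ v, ∃ n : ℕ, par^[n] v = b) (v : V) :
    par^[dep par b h v] v = b := Nat.find_spec (h v)

lemma dep_pos {V : Type*} [DecidableEq V] (par : V → V) (b : V) (h : ∀ v, ∃ n : ℕ, par^[n] v = b) {v : V} (hv : v ≠ b) :
    0 < dep par b h v := by
  rcases Nat.eq_zero_or_pos (dep par b h v) with h0 | h0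
  · exfalso; have := dep_spec par b h v; rw [h0] at this; exact hv this
  · exact h0

lemma dep_par_lt {V : Type*} [DecidableEq V] (par : V → V) (b : V) (h : ∀ v, ∃ n : ℕ, par^[n] v = b) {v : V} (hv : v ≠ b) :
    dep par b h (par v) < dep par b h v := by
  have hpos := dep_pos par b h hv
  have hb : par^[dep par b h v - 1] (par v) = b := by
    rw [← Function.iterate_succ_apply]
    have he : dep par b h v - 1 + 1 = dep par b h v := by omega
    rw [Nat.succ_eq_add_one, he]
    exact dep_spec par b h v
  have hle : dep par b h (par v) ≤ dep par b h v - 1 := by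
    unfold dep; exact Nat.find_le hb
  omega

lemma dep_lt_child {V : Type*} [DecidableEq V] (par : V → V) (b : V) (h : ∀ v, ∃ n : ℕ, par^[n] v = b) {v w : V}
    (hw : par w = v) (hwb : w ≠ b) : dep par b h v < dep par b h w := by
  have := dep_par_lt par b h hwb
  rwa [hw] at this

lemma dep_lt_card {V : Type*} [Fintype V] [DecidableEq V] (par : V → V) (b : V)
    (h : ∀ v, ∃ n : ℕ, par^[n] v = b) (v : V) :
    dep par b h v < Fintype.card V := by
  have aux : ∀ i j : ℕ, i < j → j ≤ dep par b h v → par^[i] v = par^[j] v → False := by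
    intro i j hij hjle heq
    have h1 : par^[dep par b h v - j] (par^[i] v) = par^[dep par b h v - j] (par^[j] v) := by
      rw [heq]
    rw [← Function.iterate_add_apply, ← Function.iterate_add_apply] at h1
    have h2 : dep par b h v - j + j = dep par b h v := by omega
    rw [h2, dep_spec par b h v] at h1
    have hlt2 : dep par b h v - j + i < dep par b h v := by omega
    unfold dep at hlt2
    exact Nat.find_min (h v) hlt2 h1
  have hinj : Function.Injective (fun i : Fin (dep par b h v + 1) => par^[(i : ℕ)] v) := by
    intro i j hij
    simp only at hij
    rcases lt_trichotomy (i : ℕ) (j : ℕ) with h' | h' | h'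
    · exact absurd hij (fun hh => aux _ _ h' (by omega) hh)
    · exact Fin.ext h'
    · exact absurd hij.symm (fun hh => aux _ _ h' (by omega) hh)
  calc dep par b h v < dep par b h v + 1 := Nat.lt_succ_self _
    _ = Fintype.card (Fin (dep par b h v + 1)) := (Fintype.card_fin _).symm
    _ ≤ Fintype.card V := Fintype.card_le_of_injective _ hinj

noncomputable def gflow {V : Type*} [Fintype V] [DecidableEq V] (par : V → V) (b : V)
    (h : ∀ v, ∃ n : ℕ, par^[n] v = b) (s Export : V → ℝ) (v : V) : ℝ :=
  if hv : v = b then 0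
  else if par v = b then Export v
  else Export v *
    (max 0 (gflow par b h s Export (par v) - s (par v)) /
      ∑ w ∈ Finset.univ.filter (fun w => par w = par v ∧ w ≠ par v), Export w)
termination_by dep par b h v
decreasing_by exact dep_par_lt par b h hv

lemma gflow_of_par_root {V : Type*} [Fintype V] [DecidableEq V] (par : V → V) (b : V)
    (h : ∀ v, ∃ n : ℕ, par^[n] v = b) (s Export : V → ℝ) {v : V} (hv : v ≠ b) (hp : par v = b) :
    gflow par b h s Export v = Export v := by
  rw [gflow, dif_neg hv, if_pos hp]

lemma gflow_of_ne {V : Type*} [Fintype V] [DecidableEq V] (par : V → V) (b : V)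
    (h : ∀ v, ∃ n : ℕ, par^[n] v = b) (s Export : V → ℝ) {v : V} (hv : v ≠ b) (hp : par v ≠ b) :
    gflow par b h s Export v = Export v *
      (max 0 (gflow par b h s Export (par v) - s (par v)) /
        ∑ w ∈ Finset.univ.filter (fun w => par w = par v ∧ w ≠ par v), Export w) := by
  rw [gflow, dif_neg hv, if_neg hp]

/-- Correctness of the tree recursion for maximum inflow: in a rooted tree given
by a parent map, with edge capacities `f v` (edge from `v` to its parent) and
node surpluses `s`, if `Export` satisfies the recursion
`Export v = min (s v + ∑_{w ∈ ch(v)} Export w) (f v)`, then the maximum feasible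
inflow into the root `b` equals `∑_{j ∈ ch(b)} Export j`. -/
theorem stmt_10 {V : Type*} [Fintype V] [DecidableEq V]
    (b : V) (par : V → V) (hroot : par b = b)
    (hreach : ∀ v, ∃ n : ℕ, par^[n] v = b)
    (f : V → ℝ) (hf : ∀ v, v ≠ b → 0 < f v)
    (s : V → ℝ) (hs : ∀ v, 0 ≤ s v)
    (Export : V → ℝ)
    (hExport : ∀ v, v ≠ b →
      Export v = min (s v + ∑ w ∈ Finset.univ.filter (fun w => par w = v ∧ w ≠ v),
        Export w) (f v)) :
    IsGreatest
      {r : ℝ | ∃ x : V → ℝ,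
        (∀ v, v ≠ b → |x v| ≤ f v) ∧
        (∀ v, v ≠ b →
          0 ≤ x v - ∑ w ∈ Finset.univ.filter (fun w => par w = v ∧ w ≠ v), x w ∧
          x v - ∑ w ∈ Finset.univ.filter (fun w => par w = v ∧ w ≠ v), x w ≤ s v) ∧
        r = ∑ j ∈ Finset.univ.filter (fun j => par j = b ∧ j ≠ b), x j}
      (∑ j ∈ Finset.univ.filter (fun j => par j = b ∧ j ≠ b), Export j) := by
  classical
  set d := dep par b hreach with hd
  set N := Fintype.card V with hN
  -- children w of v ≠ b are ≠ b
  have child_ne : ∀ {v w : V}, v ≠ b → par w = v → w ≠ v → w ≠ b := by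
    intro v w hv hpw _ hwb
    apply hv; rw [← hpw, hwb, hroot]
  -- Export is nonnegative
  have ExpNN : ∀ v, v ≠ b → 0 ≤ Export v := by
    have key : ∀ n v, v ≠ b → N - d v = n → 0 ≤ Export v := by
      intro n
      induction n using Nat.strong_induction_on with
      | _ n ih =>
        intro v hv hn
        rw [hExport v hv]
        refine le_min (add_nonneg (hs v) (Finset.sum_nonneg ?_)) (hf v hv).le
        intro w hw
        simp only [Finset.mem_filter, Finset.mem_univ, true_and] at hw
        have hwb : w ≠ b := child_ne hv hw.1 hw.2
        have h1 : d v < d w := dep_lt_child par b hreach hw.1 hwb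
        have h2 : d w < N := dep_lt_card par b hreach w
        exact ih (N - d w) (by omega) w hwb rfl
    intro v hv; exact key (N - d v) v hv rfl
  set g := gflow par b hreach s Export with hg
  -- g bounds
  have gBnd : ∀ v, v ≠ b → 0 ≤ g v ∧ g v ≤ Export v := by
    have key : ∀ n v, v ≠ b → d v = n → 0 ≤ g v ∧ g v ≤ Export v := by
      intro n
      induction n using Nat.strong_induction_on with
      | _ n ih =>
        intro v hv hn
        by_cases hp : par v = b
        · rw [hg, gflow_of_par_root par b hreach s Export hv hp]
          exact ⟨ExpNN v hv, le_refl _⟩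
        · have hrec : g v = Export v *
              (max 0 (g (par v) - s (par v)) /
               ∑ w ∈ Finset.univ.filter (fun w => par w = par v ∧ w ≠ par v), Export w) := by
            rw [hg]; exact gflow_of_ne par b hreach s Export hv hp
          set S := ∑ w ∈ Finset.univ.filter (fun w => par w = par v ∧ w ≠ par v), Export w with hS
          have hSnn : 0 ≤ S := by
            apply Finset.sum_nonneg
            intro w hw
            simp only [Finset.mem_filter, Finset.mem_univ, true_and] at hw
            exact ExpNN w (child_ne hp hw.1 hw.2)
          have hdp : d (par v) < n := hn ▸ dep_par_lt par b hreach hv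
          obtain ⟨hg0, hg1⟩ := ih (d (par v)) hdp (par v) hp rfl
          have hEp : Export (par v) ≤ s (par v) + S := by
            rw [hExport (par v) hp]; exact min_le_left _ _
          have hc0 : 0 ≤ max 0 (g (par v) - s (par v)) / S :=
            div_nonneg (le_max_left _ _) hSnn
          have hc1 : max 0 (g (par v) - s (par v)) / S ≤ 1 := by
            rcases eq_or_lt_of_le hSnn with hS0 | hS0
            · rw [← hS0, div_zero]; exact zero_le_one
            · rw [div_le_one hS0]
              exact max_le hSnn (by linarith)
          constructor
          · rw [hrec]; exact mul_nonneg (ExpNN v hv) hc0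
          · rw [hrec]
            calc Export v * _ ≤ Export v * 1 := by
                  exact mul_le_mul_of_nonneg_left hc1 (ExpNN v hv)
              _ = Export v := mul_one _
    intro v hv; exact key (d v) v hv rfl
  constructor
  · -- membership: g is a feasible flow achieving the value
    refine ⟨g, ?_, ?_, ?_⟩
    · intro v hv
      obtain ⟨h0, h1⟩ := gBnd v hv
      rw [abs_le]
      constructor
      · linarith [hf v hv]
      · calc g v ≤ Export v := h1
          _ ≤ f v := by rw [hExport v hv]; exact min_le_right _ _
    · intro v hv
      set S := ∑ w ∈ Finset.univ.filter (fun w => par w = v ∧ w ≠ v), Export w with hS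
      have hSnn : 0 ≤ S := by
        apply Finset.sum_nonneg
        intro w hw
        simp only [Finset.mem_filter, Finset.mem_univ, true_and] at hw
        exact ExpNN w (child_ne hv hw.1 hw.2)
      have hT : ∑ w ∈ Finset.univ.filter (fun w => par w = v ∧ w ≠ v), g w
          = S * (max 0 (g v - s v) / S) := by
        rw [hS, Finset.sum_mul]
        apply Finset.sum_congr rfl
        intro w hw
        simp only [Finset.mem_filter, Finset.mem_univ, true_and] at hw
        have hwb : w ≠ b := child_ne hv hw.1 hw.2
        rw [hg, gflow_of_ne par b hreach s Export hwb (by rw [hw.1]; exact hv), hw.1]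
      obtain ⟨hg0, hg1⟩ := gBnd v hv
      have hEv : Export v ≤ s v + S := by
        rw [hExport v hv]; exact min_le_left _ _
      rcases eq_or_lt_of_le hSnn with hS0 | hS0
      · -- S = 0
        have hT0 : ∑ w ∈ Finset.univ.filter (fun w => par w = v ∧ w ≠ v), g w = 0 := by
          rw [hT, ← hS0, zero_mul]
        rw [hT0]
        constructor
        · linarith
        · linarith
      · -- S > 0
        have hT0 : ∑ w ∈ Finset.univ.filter (fun w => par w = v ∧ w ≠ v), g w
            = max 0 (g v - s v) := by
          rw [hT, mul_div_cancel₀ _ (ne_of_gt hS0)]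
        rw [hT0]
        rcases le_or_gt (g v) (s v) with h | h
        · rw [max_eq_left (by linarith)]
          constructor <;> linarith
        · rw [max_eq_right (by linarith)]
          constructor <;> linarith [hs v]
    · apply Finset.sum_congr rfl
      intro j hj
      simp only [Finset.mem_filter, Finset.mem_univ, true_and] at hj
      rw [hg, gflow_of_par_root par b hreach s Export hj.2 hj.1]
  · -- upper bound
    rintro r ⟨x, hcap, hbal, hr⟩
    have key : ∀ n v, v ≠ b → N - d v = n → x v ≤ Export v := by
      intro n
      induction n using Nat.strong_induction_on with
      | _ n ih =>
        intro v hv hn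
        rw [hExport v hv]
        refine le_min ?_ (le_of_abs_le (hcap v hv))
        have hsum : ∑ w ∈ Finset.univ.filter (fun w => par w = v ∧ w ≠ v), x w
            ≤ ∑ w ∈ Finset.univ.filter (fun w => par w = v ∧ w ≠ v), Export w := by
          apply Finset.sum_le_sum
          intro w hw
          simp only [Finset.mem_filter, Finset.mem_univ, true_and] at hw
          have hwb : w ≠ b := child_ne hv hw.1 hw.2
          have h1 : d v < d w := dep_lt_child par b hreach hw.1 hwb
          have h2 : d w < N := dep_lt_card par b hreach w
          exact ih (N - d w) (by omega) w hwb rfl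
        have := (hbal v hv).2
        linarith
    rw [hr]
    apply Finset.sum_le_sum
    intro j hj
    simp only [Finset.mem_filter, Finset.mem_univ, true_and] at hj
    exact key (N - d j) j hj.2 rfl
end
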